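/- Let F be a field, p a monic irreducible polynomial of degree s over F, let α_1 ≥ α_2 ≥ … ≥ α_m ≥ 1 be integers, and let G = diag(G_1,…,G_m) where G_i is the generalized Jordan block of size α_i associated with p. Suppose X is a square matrix over F commuting with G, and partition X into blocks X_{i,j} of size sα_i × sα_j for i,j = 1,…,m conformally with the block structure of G. Then for all i,j: (1) if α_i = α_j then X_{i,j} commutes with G_i; (2) if α_i < α_j then the last s(α_j - α_i) columns of X_{i,j} are zero and the left sα_i × sα_i submatrix of X_{i,j} commutes with G_i; (3) if α_i > α_j then the first s(α_i - α_j) rows of X_{i,j} are zero and the bottom sα_j × sα_j submatrix of X_{i,j} commutes with G_j. -/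

import Mathlib

open Matrix Polynomial

/-- The companion matrix of a monic polynomial `p` of degree `s`:
ones on the first subdiagonal, `-(coefficients of p)` in the last column. -/
def companionMat (F : Type*) [Field F] (s : ℕ) (p : Polynomial F) :
    Matrix (Fin s) (Fin s) F :=
  Matrix.of fun i j =>
    if (j : ℕ) = s - 1 then -p.coeff (i : ℕ)
    else if (i : ℕ) = (j : ℕ) + 1 then 1 else 0

/-- The matrix `E` whose `(1,s)` entry is `1` and all other entries are `0`. -/
def Emat (F : Type*) [Field F] (s : ℕ) : Matrix (Fin s) (Fin s) F :=
  Matrix.of fun i j => if (i : ℕ) = 0 ∧ (j : ℕ) = s - 1 then 1 else 0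

/-- The generalized Jordan block of size `ℓ` associated with `p` (degree `s`):
the `sℓ × sℓ` block matrix with `ℓ` diagonal `s×s` blocks equal to the companion
matrix `C` of `p`, blocks `E` directly below the diagonal, zeros elsewhere.
Rows/columns are indexed by `Fin ℓ × Fin s` (block index, index within block). -/
def genJordanBlock (F : Type*) [Field F] (s ℓ : ℕ) (p : Polynomial F) :
    Matrix (Fin ℓ × Fin s) (Fin ℓ × Fin s) F :=
  Matrix.of fun x y =>
    if x.1 = y.1 then companionMat F s p x.2 y.2
    else if (x.1 : ℕ) = (y.1 : ℕ) + 1 then Emat F s x.2 y.2 else 0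

/-- The generalized Jordan form `diag(G_1, …, G_m)` where `G_i` is the generalized
Jordan block of size `α i` associated with `p`. Rows/columns are indexed by
`Σ i : Fin m, Fin (α i) × Fin s`. -/
def genJordanForm (F : Type*) [Field F] (s m : ℕ) (α : Fin m → ℕ) (p : Polynomial F) :
    Matrix (Σ i : Fin m, Fin (α i) × Fin s) (Σ i : Fin m, Fin (α i) × Fin s) F :=
  Matrix.of fun x y =>
    if x.1 = y.1 then
      (if (x.2.1 : ℕ) = (y.2.1 : ℕ) then companionMat F s p x.2.2 y.2.2
       else if (x.2.1 : ℕ) = (y.2.1 : ℕ) + 1 then Emat F s x.2.2 y.2.2 else 0)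
    else 0

/-!
Write `J_ℓ` for the generalized Jordan block of size `ℓ` and `N_ℓ` for the block shift
(identity blocks directly below the diagonal). A computation on the basis vectors
`e_{k,a} = J^a e_{k,0}` shows `p(J_ℓ) = N_ℓ`, so a block `Y` of `X`, which satisfies
`Y J_{ℓ'} = J_ℓ Y`, also satisfies `Y N_{ℓ'} = N_ℓ Y`. Since `N_ℓ^ℓ = 0`, we get `Y N_{ℓ'}^ℓ = 0`
and `N_ℓ^{ℓ'} Y = 0`; these kill the block columns of `Y` from `ℓ` on and its first `ℓ - ℓ'`
block rows. Finally `J` is block Toeplitz, so any window of consecutive block indices of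
`J_{ℓ'}` is again a generalized Jordan block, and the surviving square part of `Y` commutes
with it.
-/

namespace Matrix

variable {R l m n o q l' q' : Type*}

theorem submatrix_mul_of_injective [Fintype n] [Fintype o] [NonUnitalNonAssocSemiring R]
    (M : Matrix l n R) (N : Matrix n q R) (e₁ : l' → l) {e₂ : o → n}
    (e₃ : q' → q) (he₂ : Function.Injective e₂)
    (h : ∀ i k, ∀ j ∉ Set.range e₂, M (e₁ i) j * N j (e₃ k) = 0) :
    (M * N).submatrix e₁ e₃ = M.submatrix e₁ e₂ * N.submatrix e₂ e₃ :=
  ext fun i k => (Fintype.sum_of_injective e₂ he₂ _ _ (h i k) fun _ => rfl).symm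

theorem submatrix_sigmaMk_mul_eq_of_mul_blockDiagonal'_eq {ι : Type*} [Fintype ι]
    [DecidableEq ι] {n' : ι → Type*} [∀ i, Fintype (n' i)] [NonUnitalNonAssocSemiring R]
    {X : Matrix (Σ i, n' i) (Σ i, n' i) R} {M : ∀ i, Matrix (n' i) (n' i) R}
    (hX : X * blockDiagonal' M = blockDiagonal' M * X) (i j : ι) :
    X.submatrix (Sigma.mk i) (Sigma.mk j) * M j = M i * X.submatrix (Sigma.mk i) (Sigma.mk j) := by
  have hM (k : ι) : (blockDiagonal' M).submatrix (Sigma.mk k) (Sigma.mk k) = M k :=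
    ext fun _ _ => blockDiagonal'_apply_eq M k _ _
  have hzero (k : ι) (w : Σ i, n' i) (hw : w ∉ Set.range (Sigma.mk k)) (a : n' k) :
      blockDiagonal' M w ⟨k, a⟩ = 0 ∧ blockDiagonal' M ⟨k, a⟩ w = 0 := by
    obtain ⟨k', b⟩ := w
    have hk : k' ≠ k := by rintro rfl; exact hw ⟨b, rfl⟩
    exact ⟨blockDiagonal'_apply_ne M b a hk, blockDiagonal'_apply_ne M a b hk.symm⟩
  rw [← hM j, ← hM i,
    ← submatrix_mul_of_injective X _ (Sigma.mk i) (Sigma.mk j) sigma_mk_injective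
      fun _ k w hw => by rw [(hzero j w hw k).1, mul_zero],
    ← submatrix_mul_of_injective _ X (Sigma.mk i) (Sigma.mk j) sigma_mk_injective
      fun a _ w hw => by rw [(hzero i w hw a).2, zero_mul], hX]

theorem mul_pow_eq_pow_mul_of_mul_eq [Fintype m] [Fintype n] [DecidableEq m] [DecidableEq n]
    [Semiring R] {A : Matrix m m R} {B : Matrix n n R} {Y : Matrix m n R} (h : Y * B = A * Y)
    (k : ℕ) : Y * B ^ k = A ^ k * Y := by
  induction k with
  | zero => rw [pow_zero, pow_zero, Matrix.mul_one, Matrix.one_mul]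
  | succ k ih => rw [pow_succ, ← Matrix.mul_assoc, ih, Matrix.mul_assoc, h, ← Matrix.mul_assoc,
      ← pow_succ]

theorem mul_aeval_eq_aeval_mul_of_mul_eq [Fintype m] [Fintype n] [DecidableEq m]
    [DecidableEq n] [CommSemiring R] {A : Matrix m m R} {B : Matrix n n R} {Y : Matrix m n R}
    (h : Y * B = A * Y) (q : R[X]) : Y * aeval B q = aeval A q * Y := by
  rw [aeval_eq_sum_range, aeval_eq_sum_range, Matrix.mul_sum, Matrix.sum_mul]
  exact Finset.sum_congr rfl fun k _ => by
    rw [Matrix.mul_smul, Matrix.smul_mul, mul_pow_eq_pow_mul_of_mul_eq h]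

end Matrix

section GenJordanBlock

variable {F : Type*} [Field F] {s ℓ : ℕ} (p : F[X])

theorem genJordanBlock_apply (x y : Fin ℓ × Fin s) :
    genJordanBlock F s ℓ p x y =
      if (x.1 : ℕ) = y.1 then
        (if (y.2 : ℕ) = s - 1 then -p.coeff x.2 else if (x.2 : ℕ) = y.2 + 1 then 1 else 0)
      else if (x.1 : ℕ) = y.1 + 1 then (if (x.2 : ℕ) = 0 ∧ (y.2 : ℕ) = s - 1 then 1 else 0)
      else 0 := by
  simp only [genJordanBlock, companionMat, Emat, of_apply, Fin.ext_iff]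

variable (F s ℓ) in
def blockShift : Matrix (Fin ℓ × Fin s) (Fin ℓ × Fin s) F :=
  of fun x y => if (x.1 : ℕ) = y.1 + 1 ∧ x.2 = y.2 then 1 else 0

theorem blockShift_mulVec_single (k : Fin ℓ) (a : Fin s) :
    blockShift F s ℓ *ᵥ Pi.single (k, a) 1 =
      if h : (k : ℕ) + 1 < ℓ then Pi.single (⟨k + 1, h⟩, a) 1 else 0 := by
  ext x
  simp only [mulVec_single_one, col_apply, blockShift, of_apply]
  split_ifs <;> simp_all [Pi.single_apply, Prod.ext_iff, Fin.ext_iff]; omega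

theorem blockShift_pow_mulVec_single (n : ℕ) (k : Fin ℓ) (a : Fin s) :
    blockShift F s ℓ ^ n *ᵥ Pi.single (k, a) 1 =
      if h : (k : ℕ) + n < ℓ then Pi.single (⟨k + n, h⟩, a) 1 else 0 := by
  induction n generalizing k with
  | zero => rw [pow_zero, one_mulVec, dif_pos (Nat.add_zero _ ▸ k.is_lt)]; rfl
  | succ n ih =>
    rw [pow_succ, ← mulVec_mulVec, blockShift_mulVec_single]
    split_ifs with h1 h2 h2
    · rw [ih, dif_pos (by simp only; omega)]
      simp only [add_right_comm, add_assoc]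
    · rw [ih, dif_neg (by simp only; omega)]
    · omega
    · exact mulVec_zero _

theorem blockShift_pow_self : blockShift F s ℓ ^ ℓ = 0 :=
  ext_of_mulVec_single fun ⟨k, a⟩ => by
    rw [blockShift_pow_mulVec_single, dif_neg (by omega), zero_mulVec]

theorem single_vecMul_blockShift_pow {n : ℕ} (k : Fin ℓ) (a : Fin s) (h : (k : ℕ) + n < ℓ) :
    Pi.single (⟨k + n, h⟩, a) 1 ᵥ* blockShift F s ℓ ^ n = Pi.single (k, a) 1 := by
  induction n with
  | zero => rw [pow_zero, vecMul_one]; rfl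
  | succ n ih =>
    have hrow : Pi.single (⟨k + (n + 1), h⟩, a) 1 ᵥ* blockShift F s ℓ =
        Pi.single (⟨k + n, by omega⟩, a) (1 : F) := by
      ext x
      simp only [single_one_vecMul, row_apply, blockShift, of_apply, Pi.single_apply, Prod.ext_iff,
        Fin.ext_iff]
      split_ifs <;> first | rfl | omega
    rw [pow_succ', ← vecMul_vecMul, hrow, ih]

theorem genJordanBlock_mulVec_single_of_lt (k : Fin ℓ) (a : Fin s) (ha : (a : ℕ) + 1 < s) :
    genJordanBlock F s ℓ p *ᵥ Pi.single (k, a) 1 = Pi.single (k, ⟨a + 1, ha⟩) 1 := by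
  ext x
  simp only [mulVec_single_one, col_apply, genJordanBlock_apply, Pi.single_apply, Prod.ext_iff,
    Fin.ext_iff]
  split_ifs <;> first | rfl | omega

theorem genJordanBlock_mulVec_single_last (k : Fin ℓ) (a : Fin s) (ha : (a : ℕ) + 1 = s) :
    genJordanBlock F s ℓ p *ᵥ Pi.single (k, a) 1 =
      blockShift F s ℓ *ᵥ Pi.single (k, ⟨0, by omega⟩) 1 -
        ∑ i : Fin s, p.coeff i • Pi.single (k, i) 1 := by
  ext x
  have hsum : (∑ i : Fin s, p.coeff i • Pi.single (k, i) (1 : F)) x =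
      if x.1 = k then p.coeff x.2 else 0 := by
    simp [Finset.sum_apply, Pi.single_apply, Prod.ext_iff, ite_and]
  rw [Pi.sub_apply, hsum]
  simp only [mulVec_single_one, col_apply, genJordanBlock_apply, blockShift, of_apply, Fin.ext_iff]
  split_ifs <;> first | omega | ring

theorem genJordanBlock_pow_mulVec_single (k : Fin ℓ) {n : ℕ} (hn : n < s) :
    genJordanBlock F s ℓ p ^ n *ᵥ Pi.single (k, ⟨0, by omega⟩) 1 =
      Pi.single (k, ⟨n, hn⟩) 1 := by
  induction n with
  | zero => rw [pow_zero, one_mulVec]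
  | succ n ih =>
    rw [pow_succ', ← mulVec_mulVec, ih (by omega), genJordanBlock_mulVec_single_of_lt]

theorem aeval_genJordanBlock_mulVec_single_zero (hmonic : p.Monic) (hdeg : p.natDegree = s)
    (k : Fin ℓ) (hs : 0 < s) :
    aeval (genJordanBlock F s ℓ p) p *ᵥ Pi.single (k, ⟨0, hs⟩) 1 =
      blockShift F s ℓ *ᵥ Pi.single (k, ⟨0, hs⟩) 1 := by
  set J := genJordanBlock F s ℓ p
  obtain ⟨t, rfl⟩ : ∃ t, s = t + 1 := ⟨s - 1, by omega⟩
  -- the last column of `J` cancels the lower-order terms of `p(J) e_{k,0}`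
  have hlead : J ^ (t + 1) *ᵥ Pi.single (k, ⟨0, hs⟩) 1 =
      blockShift F (t + 1) ℓ *ᵥ Pi.single (k, ⟨0, hs⟩) 1 -
        ∑ i : Fin (t + 1), p.coeff i • Pi.single (k, i) 1 := by
    rw [pow_succ', ← mulVec_mulVec, genJordanBlock_pow_mulVec_single p k (Nat.lt_succ_self t),
      genJordanBlock_mulVec_single_last p k _ rfl]
  have hlc : p.coeff (t + 1) = 1 := hdeg ▸ hmonic.coeff_natDegree
  have hlow (i : Fin (t + 1)) : (p.coeff i • J ^ (i : ℕ)) *ᵥ Pi.single (k, ⟨0, hs⟩) 1 =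
      p.coeff i • Pi.single (k, i) 1 := by
    rw [smul_mulVec, genJordanBlock_pow_mulVec_single p k i.is_lt]
  rw [aeval_eq_sum_range, hdeg, Finset.sum_range_succ, hlc, one_smul, add_mulVec, hlead,
    Matrix.sum_mulVec,
    Finset.sum_range fun i => (p.coeff i • J ^ i) *ᵥ Pi.single (k, ⟨0, hs⟩) 1]
  simp only [hlow]
  abel

theorem aeval_genJordanBlock (hmonic : p.Monic) (hdeg : p.natDegree = s) :
    aeval (genJordanBlock F s ℓ p) p = blockShift F s ℓ := by
  set J := genJordanBlock F s ℓ p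
  refine ext_of_mulVec_single fun ⟨k, a⟩ => ?_
  have hcomm : aeval J p * J ^ (a : ℕ) = J ^ (a : ℕ) * aeval J p := by
    simpa using ((Commute.all p (X ^ (a : ℕ))).map (aeval J)).eq
  -- `e_{k,a} = J^a e_{k,0}`, and `p(J)` commutes with `J^a`
  rw [← genJordanBlock_pow_mulVec_single p k a.is_lt, mulVec_mulVec, hcomm, ← mulVec_mulVec,
    aeval_genJordanBlock_mulVec_single_zero p hmonic hdeg k a.pos, blockShift_mulVec_single,
    genJordanBlock_pow_mulVec_single p, blockShift_mulVec_single]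
  split_ifs
  · exact genJordanBlock_pow_mulVec_single p _ a.is_lt
  · exact mulVec_zero _

theorem genJordanBlock_submatrix_of_val_eq_add {ℓ' c : ℕ} {f : Fin ℓ → Fin ℓ'}
    (hf : ∀ a, (f a : ℕ) = a + c) :
    (genJordanBlock F s ℓ' p).submatrix (Prod.map f id) (Prod.map f id) =
      genJordanBlock F s ℓ p := by
  ext x y
  simp only [submatrix_apply, Prod.map_fst, Prod.map_snd, id, genJordanBlock_apply, hf,
    add_right_comm _ c 1, Nat.add_right_cancel_iff]

end GenJordanBlock

section Intertwiner

variable {F : Type*} [Field F] {s ℓ ℓ' : ℕ}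
  {Y : Matrix (Fin ℓ × Fin s) (Fin ℓ' × Fin s) F}

theorem mul_blockShift_eq_of_mul_genJordanBlock_eq {p : F[X]} (hmonic : p.Monic)
    (hdeg : p.natDegree = s) (hY : Y * genJordanBlock F s ℓ' p = genJordanBlock F s ℓ p * Y) :
    Y * blockShift F s ℓ' = blockShift F s ℓ * Y := by
  rw [← aeval_genJordanBlock p hmonic hdeg, ← aeval_genJordanBlock p hmonic hdeg]
  exact mul_aeval_eq_aeval_mul_of_mul_eq hY p

theorem apply_eq_zero_of_mul_blockShift_eq_of_le
    (hY : Y * blockShift F s ℓ' = blockShift F s ℓ * Y)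
    (x : Fin ℓ × Fin s) (y : Fin ℓ' × Fin s) (hy : ℓ ≤ y.1) : Y x y = 0 := by
  have hzero : Y * blockShift F s ℓ' ^ ℓ = 0 := by
    rw [mul_pow_eq_pow_mul_of_mul_eq hY, blockShift_pow_self, Matrix.zero_mul]
  have hcol :=
    congrFun (congrArg (· *ᵥ Pi.single (⟨y.1 - ℓ, by omega⟩, y.2) (1 : F)) hzero) x
  rw [← mulVec_mulVec, blockShift_pow_mulVec_single, dif_pos (by simp only; omega),
    zero_mulVec, mulVec_single_one] at hcol
  simpa [Nat.sub_add_cancel hy] using hcol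

theorem apply_eq_zero_of_mul_blockShift_eq_of_lt_sub
    (hY : Y * blockShift F s ℓ' = blockShift F s ℓ * Y)
    (x : Fin ℓ × Fin s) (y : Fin ℓ' × Fin s) (hx : x.1 < ℓ - ℓ') : Y x y = 0 := by
  have hzero : blockShift F s ℓ ^ ℓ' * Y = 0 := by
    rw [← mul_pow_eq_pow_mul_of_mul_eq hY, blockShift_pow_self, Matrix.mul_zero]
  have hrow :=
    congrFun (congrArg (Pi.single (⟨x.1 + ℓ', by omega⟩, x.2) (1 : F) ᵥ* ·) hzero) y
  rw [← vecMul_vecMul, single_vecMul_blockShift_pow, vecMul_zero, single_one_vecMul] at hrow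
  simpa using hrow

variable {p : F[X]}

theorem submatrix_castLE_mul_genJordanBlock_comm (hle : ℓ ≤ ℓ')
    (hY : Y * genJordanBlock F s ℓ' p = genJordanBlock F s ℓ p * Y)
    (hvanish : ∀ (x : Fin ℓ × Fin s) (y : Fin ℓ' × Fin s), ℓ ≤ y.1 → Y x y = 0) :
    Y.submatrix id (Prod.map (Fin.castLE hle) id) * genJordanBlock F s ℓ p =
      genJordanBlock F s ℓ p * Y.submatrix id (Prod.map (Fin.castLE hle) id) := by
  have hinj : Function.Injective (Prod.map (Fin.castLE hle) (@id (Fin s))) :=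
    (Fin.castLE_injective hle).prodMap Function.injective_id
  have hzero (x : Fin ℓ × Fin s) (w : Fin ℓ' × Fin s)
      (hw : w ∉ Set.range (Prod.map (Fin.castLE hle) id)) : Y x w = 0 :=
    hvanish x w (not_lt.mp fun hlt => hw ⟨(⟨w.1, hlt⟩, w.2), rfl⟩)
  calc Y.submatrix id (Prod.map (Fin.castLE hle) id) * genJordanBlock F s ℓ p
      = (Y * genJordanBlock F s ℓ' p).submatrix id (Prod.map (Fin.castLE hle) id) := by
        rw [submatrix_mul_of_injective _ _ _ _ hinj fun x _ w hw => by rw [hzero _ w hw, zero_mul],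
          genJordanBlock_submatrix_of_val_eq_add p (f := Fin.castLE hle) (c := 0) fun _ => rfl]
    _ = genJordanBlock F s ℓ p * Y.submatrix id (Prod.map (Fin.castLE hle) id) := by
        rw [hY]; rfl

theorem submatrix_mul_genJordanBlock_comm_of_val_eq_sub_add {f : Fin ℓ' → Fin ℓ}
    (hf : ∀ a, (f a : ℕ) = ℓ - ℓ' + a)
    (hY : Y * genJordanBlock F s ℓ' p = genJordanBlock F s ℓ p * Y)
    (hvanish : ∀ (x : Fin ℓ × Fin s) (y : Fin ℓ' × Fin s), x.1 < ℓ - ℓ' → Y x y = 0) :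
    Y.submatrix (Prod.map f id) id * genJordanBlock F s ℓ' p =
      genJordanBlock F s ℓ' p * Y.submatrix (Prod.map f id) id := by
  have hinj : Function.Injective (Prod.map f (@id (Fin s))) := by
    refine Function.Injective.prodMap (fun a b hab => Fin.ext ?_) Function.injective_id
    have := congrArg Fin.val hab
    rw [hf, hf] at this
    omega
  have hzero (w : Fin ℓ × Fin s) (hw : w ∉ Set.range (Prod.map f id)) (y : Fin ℓ' × Fin s) :
      Y w y = 0 := by
    refine hvanish w y (not_le.mp fun hge => hw ⟨(⟨w.1 - (ℓ - ℓ'), by omega⟩, w.2), ?_⟩)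
    refine Prod.ext (Fin.ext ?_) rfl
    simp only [Prod.map_fst, hf]
    omega
  calc Y.submatrix (Prod.map f id) id * genJordanBlock F s ℓ' p
      = (genJordanBlock F s ℓ p * Y).submatrix (Prod.map f id) id := by rw [← hY]; rfl
    _ = genJordanBlock F s ℓ' p * Y.submatrix (Prod.map f id) id := by
        rw [submatrix_mul_of_injective _ _ _ _ hinj fun _ y w hw => by rw [hzero w hw, mul_zero],
          genJordanBlock_submatrix_of_val_eq_add p fun a => (hf a).trans (add_comm _ _)]

end Intertwiner

theorem genJordanForm_eq_blockDiagonal' {F : Type*} [Field F] {s m : ℕ} (α : Fin m → ℕ)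
    (p : F[X]) :
    genJordanForm F s m α p = blockDiagonal' fun i => genJordanBlock F s (α i) p := by
  ext ⟨i, x⟩ ⟨j, y⟩
  by_cases hij : i = j
  · subst hij
    simp only [genJordanForm, genJordanBlock, blockDiagonal'_apply_eq, of_apply, Fin.ext_iff,
      if_true]
  · rw [blockDiagonal'_apply_ne _ _ _ hij]
    exact if_neg hij

/-- if `X` commutes with the generalized Jordan form `G = diag(G_1,…,G_m)`
with Segre characteristic `α_1 ≥ … ≥ α_m ≥ 1`, then each block `X_{i,j}` (of size
`sα_i × sα_j`) satisfies: if `α_i = α_j` it commutes with `G_i`; if `α_i < α_j` its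
last `s(α_j-α_i)` columns vanish and its left square submatrix commutes with `G_i`;
if `α_i > α_j` its first `s(α_i-α_j)` rows vanish and its bottom square submatrix
commutes with `G_j`. -/
theorem centralizer_genJordanForm
    {F : Type*} [Field F] {s m : ℕ}
    (α : Fin m → ℕ)
    (p : Polynomial F) (hmonic : p.Monic)
    (hdeg : p.natDegree = s)
    (X : Matrix (Σ i : Fin m, Fin (α i) × Fin s) (Σ i : Fin m, Fin (α i) × Fin s) F)
    (hX : X * genJordanForm F s m α p = genJordanForm F s m α p * X) :
    ∀ i j : Fin m,
      (∀ h : α i = α j,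
        (Matrix.of fun x y : Fin (α i) × Fin s =>
            X ⟨i, x⟩ ⟨j, (Fin.cast h y.1, y.2)⟩) * genJordanBlock F s (α i) p =
          genJordanBlock F s (α i) p *
            (Matrix.of fun x y : Fin (α i) × Fin s =>
              X ⟨i, x⟩ ⟨j, (Fin.cast h y.1, y.2)⟩)) ∧
      (∀ _hlt : α i < α j,
        ((∀ (x : Fin (α i) × Fin s) (y : Fin (α j) × Fin s),
            α i ≤ (y.1 : ℕ) → X ⟨i, x⟩ ⟨j, y⟩ = 0) ∧
          (Matrix.of fun x y : Fin (α i) × Fin s =>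
              X ⟨i, x⟩ ⟨j, (⟨(y.1 : ℕ), by have := y.1.isLt; omega⟩, y.2)⟩) *
              genJordanBlock F s (α i) p =
            genJordanBlock F s (α i) p *
              (Matrix.of fun x y : Fin (α i) × Fin s =>
                X ⟨i, x⟩ ⟨j, (⟨(y.1 : ℕ), by have := y.1.isLt; omega⟩, y.2)⟩))) ∧
      (∀ _hgt : α j < α i,
        ((∀ (x : Fin (α i) × Fin s) (y : Fin (α j) × Fin s),
            (x.1 : ℕ) < α i - α j → X ⟨i, x⟩ ⟨j, y⟩ = 0) ∧
          (Matrix.of fun x y : Fin (α j) × Fin s =>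
              X ⟨i, (⟨α i - α j + (x.1 : ℕ), by have := x.1.isLt; omega⟩, x.2)⟩ ⟨j, y⟩) *
              genJordanBlock F s (α j) p =
            genJordanBlock F s (α j) p *
              (Matrix.of fun x y : Fin (α j) × Fin s =>
                X ⟨i, (⟨α i - α j + (x.1 : ℕ), by have := x.1.isLt; omega⟩, x.2)⟩
                  ⟨j, y⟩))) := by
  intro i j
  rw [genJordanForm_eq_blockDiagonal'] at hX
  have hY := submatrix_sigmaMk_mul_eq_of_mul_blockDiagonal'_eq hX i j
  have hN := mul_blockShift_eq_of_mul_genJordanBlock_eq hmonic hdeg hY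
  have hcols := apply_eq_zero_of_mul_blockShift_eq_of_le hN
  have hrows := apply_eq_zero_of_mul_blockShift_eq_of_lt_sub hN
  refine ⟨fun h => ?_, fun hlt => ⟨hcols, ?_⟩, fun hgt => ⟨hrows, ?_⟩⟩
  · exact submatrix_castLE_mul_genJordanBlock_comm h.le hY hcols
  · exact submatrix_castLE_mul_genJordanBlock_comm hlt.le hY hcols
  · exact submatrix_mul_genJordanBlock_comm_of_val_eq_sub_add
      (f := fun a => ⟨α i - α j + a, by omega⟩) (fun _ => rfl) hY hrows
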